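/- Let H be a weakly norming graph and J a subgraph of H. Then for every bounded measurable f : [0,1]² → ℝ, ‖f‖_{r(J)} ≤ ‖f‖_{r(H)}, i.e., (∫ ∏_{ij∈E(J)} |f(x_i,x_j)| dμ^{|V(J)|})^{1/|E(J)|} ≤ (∫ ∏_{ij∈E(H)} |f(x_i,x_j)| dμ^{|V(H)|})^{1/|E(H)|}. -/

import Mathlib

open MeasureTheory

/-- The unit box `[0,1]^n`. -/
noncomputable def unitBox (n : ℕ) : Set (Fin n → ℝ) :=
  Set.univ.pi fun _ => Set.Icc (0 : ℝ) 1

/-- The edges of `H`, each listed once as an ordered pair `(i, j)` with `i < j`. -/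
def edgePairs {n : ℕ} (H : SimpleGraph (Fin n)) [DecidableRel H.Adj] :
    Finset (Fin n × Fin n) :=
  Finset.univ.filter fun p => H.Adj p.1 p.2 ∧ p.1 < p.2

/-- `∫ ∏_{ij ∈ E(H)} |f(x_i, x_j)| dμ^{|V(H)|}` over the unit box. -/
noncomputable def tAbs {n : ℕ} (H : SimpleGraph (Fin n)) [DecidableRel H.Adj]
    (f : ℝ → ℝ → ℝ) : ℝ :=
  ∫ x in unitBox n, ∏ p ∈ edgePairs H, |f (x p.1) (x p.2)|

/-- The functional `‖f‖_{r(H)} = tAbs(H, f)^{1/|E(H)|}`. -/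
noncomputable def rNorm {n : ℕ} (H : SimpleGraph (Fin n)) [DecidableRel H.Adj]
    (f : ℝ → ℝ → ℝ) : ℝ :=
  tAbs H f ^ (((edgePairs H).card : ℝ)⁻¹)

/-- `f` is bounded. -/
def BddFun (f : ℝ → ℝ → ℝ) : Prop := ∃ C : ℝ, ∀ x y, |f x y| ≤ C

/-- `H` is weakly norming: `‖·‖_{r(H)}` is a norm on bounded measurable functions on `[0,1]²`
(it satisfies the triangle inequality and vanishes only at the a.e. zero function; homogeneity
is automatic). -/
def WeaklyNorming {n : ℕ} (H : SimpleGraph (Fin n)) [DecidableRel H.Adj] : Prop :=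
  (∀ f g : ℝ → ℝ → ℝ, Measurable (Function.uncurry f) → Measurable (Function.uncurry g) →
    BddFun f → BddFun g →
      rNorm H (fun x y => f x y + g x y) ≤ rNorm H f + rNorm H g) ∧
  (∀ f : ℝ → ℝ → ℝ, Measurable (Function.uncurry f) → BddFun f → rNorm H f = 0 →
      ∀ᵐ z : ℝ × ℝ ∂(volume.restrict (Set.Icc (0 : ℝ) 1 ×ˢ Set.Icc (0 : ℝ) 1)),
        f z.1 z.2 = 0)


-- helpers
lemma measurableSet_unitBox (n : ℕ) : MeasurableSet (unitBox n) :=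
  MeasurableSet.univ_pi fun _ => measurableSet_Icc

lemma volume_unitBox (n : ℕ) : volume (unitBox n) = 1 := by
  rw [unitBox, volume_pi_pi]
  simp [Real.volume_Icc]

instance instProbBox (n : ℕ) : IsProbabilityMeasure (volume.restrict (unitBox n)) :=
  ⟨by rw [Measure.restrict_apply_univ]; exact volume_unitBox n⟩

lemma integrable_of_bdd {α : Type*} [MeasurableSpace α] {μ : Measure α} [IsFiniteMeasure μ]
    {F : α → ℝ} (hF : Measurable F) {C : ℝ} (hC : ∀ x, |F x| ≤ C) : Integrable F μ :=
  (integrable_const C).mono' hF.aestronglyMeasurable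
    (ae_of_all _ (by simpa [Real.norm_eq_abs] using hC))

lemma measurable_prodFactor {n : ℕ} (G : SimpleGraph (Fin n)) [DecidableRel G.Adj]
    {f : ℝ → ℝ → ℝ} (hf : Measurable (Function.uncurry f)) :
    Measurable fun x : Fin n → ℝ => ∏ p ∈ edgePairs G, |f (x p.1) (x p.2)| :=
  Finset.measurable_prod _ fun p _ => by
    have : Measurable fun x : Fin n → ℝ => (x p.1, x p.2) :=
      (measurable_pi_apply p.1).prodMk (measurable_pi_apply p.2)
    exact (hf.comp this).abs

lemma tAbs_nonneg {n : ℕ} (G : SimpleGraph (Fin n)) [DecidableRel G.Adj] (f : ℝ → ℝ → ℝ) :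
    0 ≤ tAbs G f :=
  integral_nonneg fun x => Finset.prod_nonneg fun p _ => abs_nonneg _

lemma rNorm_nonneg {n : ℕ} (G : SimpleGraph (Fin n)) [DecidableRel G.Adj] (f : ℝ → ℝ → ℝ) :
    0 ≤ rNorm G f := Real.rpow_nonneg (tAbs_nonneg G f) _

lemma tAbs_abs {n : ℕ} (G : SimpleGraph (Fin n)) [DecidableRel G.Adj] (f : ℝ → ℝ → ℝ) :
    tAbs G (fun x y => |f x y|) = tAbs G f := by
  unfold tAbs; simp [abs_abs]

lemma tAbs_const {n : ℕ} (G : SimpleGraph (Fin n)) [DecidableRel G.Adj] {t : ℝ} (ht : 0 ≤ t) :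
    tAbs G (fun _ _ => t) = t ^ (edgePairs G).card := by
  unfold tAbs
  simp only [Finset.prod_const]
  rw [setIntegral_const]
  simp [measureReal_def, volume_unitBox, abs_of_nonneg ht]

lemma rNorm_const {n : ℕ} (G : SimpleGraph (Fin n)) [DecidableRel G.Adj] {t : ℝ} (ht : 0 ≤ t)
    (hG : (edgePairs G).Nonempty) : rNorm G (fun _ _ => t) = t := by
  have hk : ((edgePairs G).card : ℝ) ≠ 0 := by
    exact_mod_cast (Finset.card_pos.mpr hG).ne'
  rw [rNorm, tAbs_const G ht, ← Real.rpow_natCast t, ← Real.rpow_mul ht,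
    mul_inv_cancel₀ hk, Real.rpow_one]

lemma rNorm_pow_card {n : ℕ} (G : SimpleGraph (Fin n)) [DecidableRel G.Adj] (f : ℝ → ℝ → ℝ)
    (hG : (edgePairs G).Nonempty) : rNorm G f ^ (edgePairs G).card = tAbs G f := by
  have hk : ((edgePairs G).card : ℝ) ≠ 0 := by
    exact_mod_cast (Finset.card_pos.mpr hG).ne'
  rw [rNorm, ← Real.rpow_natCast (tAbs G f ^ _), ← Real.rpow_mul (tAbs_nonneg G f),
    inv_mul_cancel₀ hk, Real.rpow_one]

section Key
variable {n : ℕ} (H J : SimpleGraph (Fin n)) [DecidableRel H.Adj] [DecidableRel J.Adj]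

lemma edgePairs_mono (hJH : J ≤ H) : edgePairs J ⊆ edgePairs H := by
  intro p hp
  simp only [edgePairs, Finset.mem_filter, Finset.mem_univ, true_and] at hp ⊢
  exact ⟨hJH hp.1, hp.2⟩

/-- The key inequality obtained from the triangle inequality:
`tAbs J φ ≤ 2^|E(H)| * (rNorm H φ)^|E(J)|`. -/
lemma keyIneq (hWN : WeaklyNorming H) (hJH : J ≤ H) (hJE : (edgePairs J).Nonempty)
    {φ : ℝ → ℝ → ℝ} (hφ : Measurable (Function.uncurry φ)) (hbφ : BddFun φ) :
    tAbs J φ ≤ 2 ^ (edgePairs H).card * rNorm H φ ^ (edgePairs J).card := by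
  set k := (edgePairs H).card with hk
  set j := (edgePairs J).card with hj
  have hsub := edgePairs_mono H J hJH
  have hHE : (edgePairs H).Nonempty := hJE.mono hsub
  have hjk : j ≤ k := Finset.card_le_card hsub
  have hj0 : 0 < j := Finset.card_pos.mpr hJE
  set d := k - j with hd
  have hdj : j + d = k := by omega
  set a := rNorm H φ with ha
  have ha0 : 0 ≤ a := rNorm_nonneg H φ
  set B := tAbs J φ with hB
  have hB0 : 0 ≤ B := tAbs_nonneg J φ
  obtain ⟨C₀, hC₀⟩ := hbφ
  set C := max C₀ 0 with hC
  have hCb : ∀ x y, |φ x y| ≤ C := fun x y => (hC₀ x y).trans (le_max_left _ _)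
  have hC0 : 0 ≤ C := le_max_right _ _
  -- main estimate
  have main : ∀ t : ℝ, 0 < t → B * t ^ d ≤ (a + t) ^ k := by
    intro t ht
    have ht0 : 0 ≤ t := ht.le
    set g : ℝ → ℝ → ℝ := fun x y => |φ x y| + t with hg
    have hgmeas : Measurable (Function.uncurry g) := by
      have : Measurable fun z : ℝ × ℝ => |Function.uncurry φ z| + t :=
        hφ.abs.add_const t
      exact this
    have hgb : ∀ x y, |g x y| ≤ C + t := by
      intro x y
      have h1 : 0 ≤ |φ x y| + t := add_nonneg (abs_nonneg _) ht0
      rw [hg]; rw [abs_of_nonneg h1]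
      linarith [hCb x y]
    -- pointwise estimate
    have hpt : ∀ x : Fin n → ℝ,
        (∏ p ∈ edgePairs J, |φ (x p.1) (x p.2)|) * t ^ d
          ≤ ∏ p ∈ edgePairs H, |g (x p.1) (x p.2)| := by
      intro x
      have habs : ∀ u v : ℝ, |g u v| = |φ u v| + t := fun u v =>
        abs_of_nonneg (add_nonneg (abs_nonneg _) ht0)
      have hsplit : (∏ p ∈ edgePairs H, |g (x p.1) (x p.2)|)
          = (∏ p ∈ edgePairs H \ edgePairs J, |g (x p.1) (x p.2)|) *
            ∏ p ∈ edgePairs J, |g (x p.1) (x p.2)| :=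
        (Finset.prod_sdiff hsub).symm
      rw [hsplit]
      have h1 : t ^ d ≤ ∏ p ∈ edgePairs H \ edgePairs J, |g (x p.1) (x p.2)| := by
        have : ∀ p ∈ edgePairs H \ edgePairs J, t ≤ |g (x p.1) (x p.2)| := by
          intro p _
          rw [habs]
          exact le_add_of_nonneg_left (abs_nonneg _)
        calc t ^ d = ∏ _p ∈ edgePairs H \ edgePairs J, t := by
              rw [Finset.prod_const, Finset.card_sdiff_of_subset hsub]
          _ ≤ _ := Finset.prod_le_prod (fun _ _ => ht0) this
      have h2 : (∏ p ∈ edgePairs J, |φ (x p.1) (x p.2)|)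
          ≤ ∏ p ∈ edgePairs J, |g (x p.1) (x p.2)| := by
        refine Finset.prod_le_prod (fun _ _ => abs_nonneg _) ?_
        intro p _
        rw [habs]
        exact le_add_of_nonneg_right ht0
      calc (∏ p ∈ edgePairs J, |φ (x p.1) (x p.2)|) * t ^ d
          ≤ (∏ p ∈ edgePairs H \ edgePairs J, |g (x p.1) (x p.2)|) *
            ∏ p ∈ edgePairs J, |φ (x p.1) (x p.2)| := by
            rw [mul_comm]
            exact mul_le_mul_of_nonneg_right h1
              (Finset.prod_nonneg fun _ _ => abs_nonneg _)
        _ ≤ _ := mul_le_mul_of_nonneg_left h2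
              (Finset.prod_nonneg fun _ _ => abs_nonneg _)
    -- integrate
    have hstep1 : B * t ^ d ≤ tAbs H g := by
      have hint : Integrable (fun x : Fin n → ℝ => ∏ p ∈ edgePairs H, |g (x p.1) (x p.2)|)
          (volume.restrict (unitBox n)) := by
        refine integrable_of_bdd (measurable_prodFactor H hgmeas) (C := (C + t) ^ k) ?_
        intro x
        rw [abs_of_nonneg (Finset.prod_nonneg fun _ _ => abs_nonneg _)]
        calc (∏ p ∈ edgePairs H, |g (x p.1) (x p.2)|) ≤ ∏ _p ∈ edgePairs H, (C + t) :=
            Finset.prod_le_prod (fun _ _ => abs_nonneg _) fun p _ => hgb _ _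
          _ = (C + t) ^ k := by rw [Finset.prod_const]
      have := integral_mono_of_nonneg (μ := volume.restrict (unitBox n))
        (f := fun x => (∏ p ∈ edgePairs J, |φ (x p.1) (x p.2)|) * t ^ d)
        (g := fun x => ∏ p ∈ edgePairs H, |g (x p.1) (x p.2)|)
        (ae_of_all _ fun x => mul_nonneg (Finset.prod_nonneg fun _ _ => abs_nonneg _)
          (pow_nonneg ht0 _))
        hint (ae_of_all _ hpt)
      calc B * t ^ d
          = ∫ x in unitBox n, (∏ p ∈ edgePairs J, |φ (x p.1) (x p.2)|) * t ^ d := by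
            rw [integral_mul_const]; rfl
        _ ≤ tAbs H g := this
    -- triangle inequality side
    have hstep2 : tAbs H g ≤ (a + t) ^ k := by
      have htri := hWN.1 (fun x y => |φ x y|) (fun _ _ => t)
        (by exact hφ.abs) (by exact measurable_const)
        ⟨C, fun x y => by rw [abs_abs]; exact hCb x y⟩
        ⟨|t|, fun _ _ => le_refl _⟩
      have habs : rNorm H (fun x y => |φ x y|) = rNorm H φ := by
        rw [rNorm, rNorm, tAbs_abs]
      rw [habs, rNorm_const H ht0 hHE] at htri
      have hgnn : rNorm H g ≤ a + t := htri
      calc tAbs H g = rNorm H g ^ k := (rNorm_pow_card H g hHE).symm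
        _ ≤ (a + t) ^ k := pow_le_pow_left₀ (rNorm_nonneg H g) hgnn k
    exact hstep1.trans hstep2
  -- case analysis
  rcases eq_or_lt_of_le ha0 with hA | hA
  · -- a = 0 : B = 0
    have hBle : ∀ ε : ℝ, 0 < ε → B ≤ ε := by
      intro ε hε
      set t := min ε 1 with htdef
      have ht : 0 < t := lt_min hε one_pos
      have ht1 : t ≤ 1 := min_le_right _ _
      have := main t ht
      rw [← hA, zero_add] at this
      -- B * t^d ≤ t^k = t^j * t^d
      have htk : t ^ k = t ^ j * t ^ d := by rw [← pow_add, hdj]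
      rw [htk] at this
      have hBtj : B ≤ t ^ j := le_of_mul_le_mul_right (by linarith [this]) (pow_pos ht d)
      calc B ≤ t ^ j := hBtj
        _ ≤ t ^ 1 := pow_le_pow_of_le_one ht.le ht1 hj0
        _ ≤ ε := by rw [pow_one]; exact min_le_left _ _
    have hB0' : B ≤ 0 := le_of_forall_pos_le_add (by intro ε hε; rw [zero_add]; exact hBle ε hε)
    have : B = 0 := le_antisymm hB0' hB0
    rw [this, ← hA]
    positivity
  · -- a > 0
    have := main a hA
    have hak : (a + a) ^ k = 2 ^ k * (a ^ j * a ^ d) := by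
      rw [← pow_add, hdj, ← two_mul, mul_pow]
    rw [hak] at this
    have h2 : B * a ^ d ≤ (2 ^ k * a ^ j) * a ^ d := by
      calc B * a ^ d ≤ 2 ^ k * (a ^ j * a ^ d) := this
        _ = (2 ^ k * a ^ j) * a ^ d := by ring
    exact le_of_mul_le_mul_right h2 (pow_pos hA d)

end Key

section Step
variable {n : ℕ}

/-- Index of the dyadic cell of `[0,1]` (subdivided in `N` pieces) containing `x`. -/
noncomputable def dIdx (N : ℕ) (x : ℝ) : ℕ := min (⌊(N : ℝ) * x⌋.toNat) (N - 1)

lemma dIdx_lt {N : ℕ} (hN : 0 < N) (x : ℝ) : dIdx N x < N :=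
  lt_of_le_of_lt (min_le_right _ _) (by omega)

lemma measurable_dIdx (N : ℕ) : Measurable (dIdx N) := by
  have h1 : Measurable fun x : ℝ => ⌊(N : ℝ) * x⌋ :=
    Int.measurable_floor.comp (measurable_const_mul _)
  exact (measurable_of_countable fun z : ℤ => min z.toNat (N - 1)).comp h1

/-- The step function on `[0,1]²` with cell values `g`. -/
noncomputable def stepFn (N : ℕ) (g : ℕ → ℕ → ℝ) : ℝ → ℝ → ℝ :=
  fun x y => g (dIdx N x) (dIdx N y)

lemma measurable_stepFn (N : ℕ) (g : ℕ → ℕ → ℝ) :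
    Measurable (Function.uncurry (stepFn N g)) := by
  have h1 : Measurable fun z : ℝ × ℝ => (dIdx N z.1, dIdx N z.2) :=
    ((measurable_dIdx N).comp measurable_fst).prodMk ((measurable_dIdx N).comp measurable_snd)
  exact (measurable_of_countable fun q : ℕ × ℕ => g q.1 q.2).comp h1

lemma bddFun_stepFn {N : ℕ} (hN : 0 < N) (g : ℕ → ℕ → ℝ) : BddFun (stepFn N g) := by
  classical
  refine ⟨∑ i ∈ Finset.range N, ∑ j ∈ Finset.range N, |g i j|, fun x y => ?_⟩
  have hx := dIdx_lt hN x
  have hy := dIdx_lt hN y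
  calc |stepFn N g x y| = |g (dIdx N x) (dIdx N y)| := rfl
    _ ≤ ∑ j ∈ Finset.range N, |g (dIdx N x) j| := by
        refine Finset.single_le_sum (f := fun j => |g (dIdx N x) j|)
          (fun i _ => abs_nonneg _) ?_
        exact Finset.mem_range.mpr hy
    _ ≤ _ := by
        refine Finset.single_le_sum (f := fun i => ∑ j ∈ Finset.range N, |g i j|)
          (fun i _ => Finset.sum_nonneg fun j _ => abs_nonneg _) ?_
        exact Finset.mem_range.mpr hx

/-- The cell with index `i`. -/
def cellSet (N : ℕ) (i : ℕ) : Set ℝ := Set.Icc 0 1 ∩ (dIdx N) ⁻¹' {i}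

lemma measurableSet_cellSet (N i : ℕ) : MeasurableSet (cellSet N i) :=
  measurableSet_Icc.inter ((measurable_dIdx N) (measurableSet_singleton i))

lemma cellSet_subset {N i : ℕ} (hN : 0 < N) (hi : i < N) :
    cellSet N i ⊆ Set.Icc ((i : ℝ) / N) ((i + 1 : ℝ) / N) := by
  rintro x ⟨hx01, hxi⟩
  simp only [Set.mem_preimage, Set.mem_singleton_iff] at hxi
  have hN' : (0 : ℝ) < N := by exact_mod_cast hN
  obtain ⟨hx0, hx1⟩ := hx01
  have hfl0 : 0 ≤ ⌊(N : ℝ) * x⌋ := Int.floor_nonneg.mpr (by positivity)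
  by_cases hz : ⌊(N : ℝ) * x⌋.toNat ≤ N - 1
  · have hiz : i = ⌊(N : ℝ) * x⌋.toNat := by rw [← hxi, dIdx, min_eq_left hz]
    have h1 : (⌊(N : ℝ) * x⌋ : ℝ) ≤ (N : ℝ) * x := Int.floor_le _
    have h2 : (N : ℝ) * x < ⌊(N : ℝ) * x⌋ + 1 := Int.lt_floor_add_one _
    have hcast : ((i : ℝ)) = ((⌊(N : ℝ) * x⌋ : ℤ) : ℝ) := by
      rw [hiz]
      exact_mod_cast Int.toNat_of_nonneg hfl0
    constructor
    · rw [div_le_iff₀ hN', mul_comm]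
      rw [hcast]; exact h1
    · rw [le_div_iff₀ hN', mul_comm]
      rw [hcast]; linarith
  · have hiz : i = N - 1 := by rw [← hxi, dIdx, min_eq_right (le_of_not_ge hz)]
    push_neg at hz
    have hge : (N : ℤ) ≤ ⌊(N : ℝ) * x⌋ := by
      have : (N - 1 : ℕ) < ⌊(N : ℝ) * x⌋.toNat := hz
      omega
    have h1 : (N : ℝ) ≤ (N : ℝ) * x := by
      calc (N : ℝ) = ((N : ℤ) : ℝ) := by norm_cast
        _ ≤ (⌊(N : ℝ) * x⌋ : ℝ) := by exact_mod_cast hge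
        _ ≤ (N : ℝ) * x := Int.floor_le _
    have hx1' : x = 1 := by
      have : (1 : ℝ) ≤ x := by
        have := (mul_le_mul_iff_right₀ hN').mp (by linarith : (N:ℝ) * 1 ≤ (N:ℝ) * x)
        linarith
      linarith
    subst hx1'
    rw [hiz]
    have hc : ((N - 1 : ℕ) : ℝ) = (N : ℝ) - 1 := by
      push_cast [Nat.cast_sub hN]
      ring
    constructor
    · rw [div_le_one hN', hc]; linarith
    · rw [le_div_iff₀ hN', one_mul, hc]; linarith

lemma cellSet_superset {N i : ℕ} (hi : i < N) :
    Set.Ico ((i : ℝ) / N) ((i + 1 : ℝ) / N) ⊆ cellSet N i := by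
  rintro x ⟨hlo, hhi⟩
  have hN : 0 < N := by omega
  have hN' : (0 : ℝ) < N := by exact_mod_cast hN
  have hx0 : 0 ≤ x := le_trans (by positivity) hlo
  have hx1 : x ≤ 1 := by
    have : ((i : ℝ) + 1) / N ≤ 1 := by
      rw [div_le_one hN']
      exact_mod_cast hi
    linarith
  refine ⟨⟨hx0, hx1⟩, ?_⟩
  simp only [Set.mem_preimage, Set.mem_singleton_iff]
  have hfl : ⌊(N : ℝ) * x⌋ = (i : ℤ) := by
    rw [Int.floor_eq_iff]
    constructor
    · rw [div_le_iff₀ hN', mul_comm] at hlo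
      exact_mod_cast hlo
    · rw [lt_div_iff₀ hN', mul_comm] at hhi
      push_cast
      exact_mod_cast hhi
  rw [dIdx, hfl]
  simp
  omega

lemma volume_cellSet {N i : ℕ} (hN : 0 < N) (hi : i < N) :
    volume (cellSet N i) = ENNReal.ofReal (1 / N) := by
  have hN' : (0 : ℝ) < N := by exact_mod_cast hN
  have hd : ((i : ℝ) + 1) / N - (i : ℝ) / N = 1 / N := by field_simp; ring
  have h1 : volume (cellSet N i) ≤ ENNReal.ofReal (1 / N) := by
    have := measure_mono (μ := volume) (cellSet_subset hN hi)
    rwa [Real.volume_Icc, hd] at this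
  have h2 : ENNReal.ofReal (1 / N) ≤ volume (cellSet N i) := by
    have := measure_mono (μ := volume) (cellSet_superset (N := N) (i := i) hi)
    rwa [Real.volume_Ico, hd] at this
  exact le_antisymm h1 h2

end Step

section Discrete
variable {n : ℕ} (G : SimpleGraph (Fin n)) [DecidableRel G.Adj]

/-- The discrete homomorphism-count functional. -/
noncomputable def dT (N : ℕ) (g : ℕ → ℕ → ℝ) : ℝ :=
  ∑ c ∈ Fintype.piFinset (fun _ : Fin n => Finset.range N),
    ∏ p ∈ edgePairs G, |g (c p.1) (c p.2)|

lemma dT_nonneg (N : ℕ) (g : ℕ → ℕ → ℝ) : 0 ≤ dT G N g :=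
  Finset.sum_nonneg fun c _ => Finset.prod_nonneg fun p _ => abs_nonneg _

/-- `tAbs` of a step function equals the normalized discrete functional. -/
lemma tAbs_stepFn {N : ℕ} (hN : 0 < N) (g : ℕ → ℕ → ℝ) :
    tAbs G (stepFn N g) = ((N : ℝ) ^ n)⁻¹ * dT G N g := by
  classical
  set T : (Fin n → ℕ) → Set (Fin n → ℝ) := fun c => Set.univ.pi fun v => cellSet N (c v) with hT
  have hTmeas : ∀ c, MeasurableSet (T c) := fun c =>
    MeasurableSet.univ_pi fun v => measurableSet_cellSet N (c v)
  have hTbox : ∀ c, T c ⊆ unitBox n := by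
    intro c x hx
    intro v _
    exact (hx v (Set.mem_univ v)).1
  have hvolT : ∀ c ∈ Fintype.piFinset (fun _ : Fin n => Finset.range N),
      volume (T c) = ENNReal.ofReal (1 / N) ^ n := by
    intro c hc
    rw [hT]
    rw [volume_pi_pi]
    have : ∀ v, volume (cellSet N (c v)) = ENNReal.ofReal (1 / N) := by
      intro v
      exact volume_cellSet hN (Finset.mem_range.mp (Fintype.mem_piFinset.mp hc v))
    simp [this]
  -- box is the disjoint union of the T c
  have hcover : unitBox n = ⋃ c ∈ Fintype.piFinset (fun _ : Fin n => Finset.range N), T c := by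
    apply Set.Subset.antisymm
    · intro x hx
      refine Set.mem_iUnion₂.mpr ⟨fun v => dIdx N (x v),
        Fintype.mem_piFinset.mpr fun v => Finset.mem_range.mpr (dIdx_lt hN _), ?_⟩
      intro v _
      exact ⟨hx v (Set.mem_univ v), rfl⟩
    · intro x hx
      obtain ⟨c, _, hc⟩ := Set.mem_iUnion₂.mp hx
      exact hTbox c hc
  have hdisj : ∀ c ∈ Fintype.piFinset (fun _ : Fin n => Finset.range N),
      ∀ c' ∈ Fintype.piFinset (fun _ : Fin n => Finset.range N), c ≠ c' →
      Disjoint (T c) (T c') := by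
    intro c _ c' _ hne
    rw [Set.disjoint_left]
    intro x hx hx'
    apply hne
    funext v
    have h1 := (hx v (Set.mem_univ v)).2
    have h2 := (hx' v (Set.mem_univ v)).2
    simp only [Set.mem_preimage, Set.mem_singleton_iff] at h1 h2
    rw [← h1, ← h2]
  have hF : Measurable fun x : Fin n → ℝ => ∏ p ∈ edgePairs G,
      |stepFn N g (x p.1) (x p.2)| := measurable_prodFactor G (measurable_stepFn N g)
  obtain ⟨Cb, hCb⟩ := bddFun_stepFn hN g
  set F : (Fin n → ℝ) → ℝ :=
    fun x => ∏ p ∈ edgePairs G, |stepFn N g (x p.1) (x p.2)| with hFdef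
  have hFb : ∀ x : Fin n → ℝ, |F x| ≤ (max Cb 0) ^ (edgePairs G).card := by
    intro x
    rw [hFdef, abs_of_nonneg (Finset.prod_nonneg fun _ _ => abs_nonneg _),
      ← Finset.prod_const]
    exact Finset.prod_le_prod (fun _ _ => abs_nonneg _)
      (fun p _ => (hCb _ _).trans (le_max_left _ _))
  have hint : ∀ c, IntegrableOn
      (fun x : Fin n → ℝ => ∏ p ∈ edgePairs G, |stepFn N g (x p.1) (x p.2)|) (T c) := by
    intro c
    haveI : IsFiniteMeasure (volume.restrict (T c)) := by
      constructor
      rw [Measure.restrict_apply_univ]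
      exact lt_of_le_of_lt (measure_mono (hTbox c)) (by rw [volume_unitBox]; exact ENNReal.one_lt_top)
    exact integrable_of_bdd hF hFb
  calc tAbs G (stepFn N g)
      = ∫ x in ⋃ c ∈ Fintype.piFinset (fun _ : Fin n => Finset.range N), T c,
          ∏ p ∈ edgePairs G, |stepFn N g (x p.1) (x p.2)| := by rw [tAbs, ← hcover]
    _ = ∑ c ∈ Fintype.piFinset (fun _ : Fin n => Finset.range N),
          ∫ x in T c, ∏ p ∈ edgePairs G, |stepFn N g (x p.1) (x p.2)| :=
        integral_biUnion_finset _ (fun c _ => hTmeas c) hdisj (fun c _ => hint c)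
    _ = ∑ c ∈ Fintype.piFinset (fun _ : Fin n => Finset.range N),
          (∏ p ∈ edgePairs G, |g (c p.1) (c p.2)|) * ((N : ℝ) ^ n)⁻¹ := by
        refine Finset.sum_congr rfl fun c hc => ?_
        have heq : Set.EqOn (fun x : Fin n → ℝ => ∏ p ∈ edgePairs G,
            |stepFn N g (x p.1) (x p.2)|)
            (fun _ => ∏ p ∈ edgePairs G, |g (c p.1) (c p.2)|) (T c) := by
          intro x hx
          refine Finset.prod_congr rfl fun p _ => ?_
          have h1 := (hx p.1 (Set.mem_univ p.1)).2
          have h2 := (hx p.2 (Set.mem_univ p.2)).2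
          simp only [Set.mem_preimage, Set.mem_singleton_iff] at h1 h2
          rw [stepFn, h1, h2]
        rw [setIntegral_congr_fun (hTmeas c) heq, setIntegral_const, measureReal_def, hvolT c hc]
        rw [smul_eq_mul, mul_comm]
        congr 1
        rw [← ENNReal.ofReal_pow (by positivity), ENNReal.toReal_ofReal (by positivity)]
        rw [one_div, inv_pow]
    _ = ((N : ℝ) ^ n)⁻¹ * dT G N g := by
        rw [dT, Finset.mul_sum]
        refine Finset.sum_congr rfl fun c _ => mul_comm _ _

/-- Tensor product of two discrete kernels, second of size `M`. -/
def tk (M : ℕ) (g h : ℕ → ℕ → ℝ) : ℕ → ℕ → ℝ :=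
  fun a b => g (a / M) (b / M) * h (a % M) (b % M)

lemma dT_tk (A M : ℕ) (hM : 0 < M) (g h : ℕ → ℕ → ℝ) :
    dT G (A * M) (tk M g h) = dT G A g * dT G M h := by
  classical
  rw [dT, dT, dT, Finset.sum_mul_sum, ← Finset.sum_product']
  refine Finset.sum_nbij' (fun c => (fun v => c v / M, fun v => c v % M))
    (fun q => fun v => q.1 v * M + q.2 v) ?_ ?_ ?_ ?_ ?_
  · intro c hc
    rw [Fintype.mem_piFinset] at hc
    rw [Finset.mem_product]
    constructor
    · refine Fintype.mem_piFinset.mpr fun v => Finset.mem_range.mpr ?_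
      exact Nat.div_lt_of_lt_mul (by rw [mul_comm]; exact Finset.mem_range.mp (hc v))
    · exact Fintype.mem_piFinset.mpr fun v => Finset.mem_range.mpr (Nat.mod_lt _ hM)
  · intro q hq
    rw [Finset.mem_product] at hq
    refine Fintype.mem_piFinset.mpr fun v => Finset.mem_range.mpr ?_
    have h1 := Finset.mem_range.mp (Fintype.mem_piFinset.mp hq.1 v)
    have h2 := Finset.mem_range.mp (Fintype.mem_piFinset.mp hq.2 v)
    calc q.1 v * M + q.2 v < q.1 v * M + M := by omega
      _ = (q.1 v + 1) * M := by ring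
      _ ≤ A * M := Nat.mul_le_mul_right _ h1
  · intro c hc
    funext v
    simp only []
    rw [mul_comm]
    exact Nat.div_add_mod _ _
  · intro q hq
    rw [Finset.mem_product] at hq
    have h2 := fun v => Finset.mem_range.mp (Fintype.mem_piFinset.mp hq.2 v)
    have h2' : ∀ v, (q.1 v * M + q.2 v) / M = q.1 v := by
      intro v
      rw [mul_comm, Nat.mul_add_div hM, Nat.div_eq_of_lt (h2 v), add_zero]
    have h2'' : ∀ v, (q.1 v * M + q.2 v) % M = q.2 v := by
      intro v
      rw [Nat.add_mod, Nat.mul_mod_left, zero_add, Nat.mod_mod_of_dvd _ dvd_rfl, Nat.mod_eq_of_lt (h2 v)]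
    exact Prod.ext (funext h2') (funext h2'')
  · intro c hc
    rw [← Finset.prod_mul_distrib]
    exact Finset.prod_congr rfl fun p _ => by rw [tk, abs_mul]

/-- Iterated tensor power of a kernel: `iterK g N m` has size `N^(m+1)`. -/
def iterK (g : ℕ → ℕ → ℝ) (N : ℕ) : ℕ → (ℕ → ℕ → ℝ)
  | 0 => g
  | m + 1 => tk N (iterK g N m) g

lemma dT_iterK (N : ℕ) (hN : 0 < N) (g : ℕ → ℕ → ℝ) (m : ℕ) :
    dT G (N ^ (m + 1)) (iterK g N m) = dT G N g ^ (m + 1) := by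
  induction m with
  | zero => simp [iterK]
  | succ m ih =>
    have hpow : N ^ (m + 2) = N ^ (m + 1) * N := by ring
    rw [hpow, iterK, dT_tk G _ N hN, ih]
    ring

lemma tAbs_iterK {N : ℕ} (hN : 0 < N) (g : ℕ → ℕ → ℝ) (m : ℕ) :
    tAbs G (stepFn (N ^ (m + 1)) (iterK g N m)) = tAbs G (stepFn N g) ^ (m + 1) := by
  have hNm : 0 < N ^ (m + 1) := pow_pos hN _
  rw [tAbs_stepFn G hNm, dT_iterK G N hN, tAbs_stepFn G hN, mul_pow]
  congr 1
  have hcomm : ((N:ℝ) ^ (m+1)) ^ n = ((N:ℝ) ^ n) ^ (m+1) := by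
    rw [← pow_mul, ← pow_mul, mul_comm]
  rw [Nat.cast_pow, hcomm, ← inv_pow]

lemma le_of_pow_le_const_mul_pow {x y C : ℝ} (hx : 0 ≤ x) (hy : 0 ≤ y)
    (h : ∀ m : ℕ, x ^ (m + 1) ≤ C * y ^ (m + 1)) : x ≤ y := by
  rcases eq_or_lt_of_le hy with hy0 | hy0
  · have h0 := h 0
    rw [pow_one, pow_one, ← hy0, mul_zero] at h0
    exact h0.trans hy0.le
  by_contra hxy
  push_neg at hxy
  have hx0 : 0 < x := lt_trans hy0 hxy
  have hr : 1 < x / y := (one_lt_div hy0).mpr hxy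
  have hC : ∀ m : ℕ, (x / y) ^ (m + 1) ≤ C := by
    intro m
    rw [div_pow, div_le_iff₀ (pow_pos hy0 _)]
    exact h m
  obtain ⟨m, hm⟩ := ((tendsto_pow_atTop_atTop_of_one_lt hr).eventually_gt_atTop C).exists
  have := hC m
  have hmono : (x / y) ^ m ≤ (x / y) ^ (m + 1) :=
    pow_le_pow_right₀ hr.le (Nat.le_succ m)
  linarith

/-- rpow/pow commutation for nonnegative base. -/
lemma rpow_pow_comm {b : ℝ} (hb : 0 ≤ b) (m : ℕ) (c : ℝ) :
    (b ^ m) ^ c = (b ^ c) ^ m := by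
  rw [← Real.rpow_natCast b m, ← Real.rpow_mul hb, mul_comm, Real.rpow_mul hb,
    Real.rpow_natCast]

/-- The monotonicity for step functions, via the tensor-power trick. -/
lemma rNorm_step_le {H J : SimpleGraph (Fin n)} [DecidableRel H.Adj] [DecidableRel J.Adj]
    (hWN : WeaklyNorming H) (hJH : J ≤ H) (hJE : (edgePairs J).Nonempty)
    {N : ℕ} (hN : 0 < N) (g : ℕ → ℕ → ℝ) :
    rNorm J (stepFn N g) ≤ rNorm H (stepFn N g) := by
  set k := (edgePairs H).card with hk
  set j := (edgePairs J).card with hj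
  have hHE : (edgePairs H).Nonempty := hJE.mono (edgePairs_mono H J hJH)
  have hj0 : 0 < j := Finset.card_pos.mpr hJE
  set p := stepFn N g with hp
  set y := rNorm H p with hy
  have hy0 : 0 ≤ y := rNorm_nonneg H p
  have key : ∀ m : ℕ, tAbs J p ^ (m + 1) ≤ 2 ^ k * (y ^ j) ^ (m + 1) := by
    intro m
    have hNm : 0 < N ^ (m + 1) := pow_pos hN _
    have h1 := keyIneq H J hWN hJH hJE
      (measurable_stepFn (N ^ (m + 1)) (iterK g N m)) (bddFun_stepFn hNm (iterK g N m))
    rw [tAbs_iterK J hN g m] at h1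
    have h2 : rNorm H (stepFn (N ^ (m + 1)) (iterK g N m)) = y ^ (m + 1) := by
      rw [rNorm, tAbs_iterK H hN g m, rpow_pow_comm (tAbs_nonneg H p) (m + 1), hy, rNorm]
    rw [h2] at h1
    calc tAbs J p ^ (m + 1) ≤ 2 ^ k * (y ^ (m + 1)) ^ j := h1
      _ = 2 ^ k * (y ^ j) ^ (m + 1) := by rw [← pow_mul, ← pow_mul, mul_comm (m+1) j]
  have hfin : tAbs J p ≤ y ^ j :=
    le_of_pow_le_const_mul_pow (tAbs_nonneg J p) (pow_nonneg hy0 j) key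
  have : rNorm J p ≤ (y ^ j) ^ ((j : ℝ)⁻¹) :=
    Real.rpow_le_rpow (tAbs_nonneg J p) hfin (by positivity)
  calc rNorm J p ≤ (y ^ j) ^ ((j : ℝ)⁻¹) := this
    _ = y := by
      rw [← Real.rpow_natCast y j, ← Real.rpow_mul hy0, mul_inv_cancel₀
        (by exact_mod_cast hj0.ne'), Real.rpow_one]

end Discrete

section Approx
open Filter Topology

noncomputable abbrev mu0 : Measure ℝ := volume.restrict (Set.Icc (0 : ℝ) 1)

instance : IsProbabilityMeasure mu0 :=
  ⟨by rw [Measure.restrict_apply_univ, Real.volume_Icc]; norm_num⟩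

variable {n : ℕ}

/-- Pushforward of the box measure under evaluation at two distinct coordinates. -/
lemma map_eval_pair {u v : Fin n} (huv : u ≠ v) :
    Measure.map (fun x : Fin n → ℝ => (x u, x v)) (volume.restrict (unitBox n))
      = mu0.prod mu0 := by
  have hT : Measurable fun x : Fin n → ℝ => (x u, x v) :=
    (measurable_pi_apply u).prodMk (measurable_pi_apply v)
  refine (Measure.prod_eq (μ := mu0) (ν := mu0) fun s t hs ht => ?_).symm
  rw [Measure.map_apply hT (hs.prod ht), Measure.restrict_apply (hT (hs.prod ht))]
  have hset : (fun x : Fin n → ℝ => (x u, x v)) ⁻¹' (s ×ˢ t) ∩ unitBox n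
      = Set.univ.pi fun w =>
          (if w = u then s else if w = v then t else Set.univ) ∩ Set.Icc (0 : ℝ) 1 := by
    ext x
    simp only [Set.mem_inter_iff, Set.mem_preimage, Set.mem_prod, Set.mem_pi, Set.mem_univ,
      true_implies, unitBox]
    constructor
    · rintro ⟨⟨hxu, hxv⟩, hbox⟩ w
      by_cases hw : w = u
      · subst hw; rw [if_pos rfl]; exact ⟨hxu, hbox w⟩
      · by_cases hw' : w = v
        · subst hw'; rw [if_neg hw, if_pos rfl]; exact ⟨hxv, hbox w⟩
        · rw [if_neg hw, if_neg hw']; exact ⟨Set.mem_univ _, hbox w⟩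
    · intro hall
      have h1 := hall u
      rw [if_pos rfl] at h1
      have h2 := hall v
      rw [if_neg (Ne.symm huv), if_pos rfl] at h2
      refine ⟨⟨h1.1, h2.1⟩, fun w => ?_⟩
      have h3 := hall w
      by_cases hw : w = u
      · subst hw; rw [if_pos rfl] at h3; exact h3.2
      · by_cases hw' : w = v
        · subst hw'; rw [if_neg hw, if_pos rfl] at h3; exact h3.2
        · rw [if_neg hw, if_neg hw'] at h3; exact h3.2
  rw [hset, volume_pi_pi]
  have hone : ∀ w : Fin n, w ∉ ({u, v} : Finset (Fin n)) →
      volume ((if w = u then s else if w = v then t else Set.univ) ∩ Set.Icc (0 : ℝ) 1) = 1 := by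
    intro w hw
    simp only [Finset.mem_insert, Finset.mem_singleton, not_or] at hw
    rw [if_neg hw.1, if_neg hw.2, Set.univ_inter, Real.volume_Icc]
    norm_num
  rw [← Finset.prod_subset (Finset.subset_univ ({u, v} : Finset (Fin n)))
    (fun w _ hw => hone w hw), Finset.prod_pair huv]
  rw [if_pos rfl, if_neg (Ne.symm huv), if_pos rfl]
  rw [Measure.restrict_apply hs, Measure.restrict_apply ht]

/-- Transfer of integrals over the box to integrals over the square. -/
lemma integral_eval_pair {u v : Fin n} (huv : u ≠ v) {h : ℝ × ℝ → ℝ} (hh : Measurable h) :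
    ∫ x in unitBox n, h (x u, x v) = ∫ z, h z ∂(mu0.prod mu0) := by
  rw [← map_eval_pair huv, integral_map (((measurable_pi_apply u).prodMk
    (measurable_pi_apply v)).aemeasurable) hh.aestronglyMeasurable]

/-- Pointwise bound for differences of products. -/
lemma abs_prod_sub_prod_le {ι : Type*} (s : Finset ι) (a b : ι → ℝ) {C : ℝ} (hC : 1 ≤ C)
    (ha : ∀ i ∈ s, |a i| ≤ C) (hb : ∀ i ∈ s, |b i| ≤ C) :
    |(∏ i ∈ s, a i) - ∏ i ∈ s, b i| ≤ C ^ s.card * ∑ i ∈ s, |a i - b i| := by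
  classical
  induction s using Finset.induction_on with
  | empty => simp
  | @insert x s hx ih =>
    have hC0 : 0 ≤ C := le_trans zero_le_one hC
    have ha' : ∀ i ∈ s, |a i| ≤ C := fun i hi => ha i (Finset.mem_insert_of_mem hi)
    have hb' : ∀ i ∈ s, |b i| ≤ C := fun i hi => hb i (Finset.mem_insert_of_mem hi)
    have ihs := ih ha' hb'
    rw [Finset.prod_insert hx, Finset.prod_insert hx, Finset.sum_insert hx,
      Finset.card_insert_of_notMem hx]
    have hsplit : a x * ∏ i ∈ s, a i - b x * ∏ i ∈ s, b i
        = a x * ((∏ i ∈ s, a i) - ∏ i ∈ s, b i) + (a x - b x) * ∏ i ∈ s, b i := by ring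
    have hprodb : |∏ i ∈ s, b i| ≤ C ^ s.card := by
      rw [Finset.abs_prod, ← Finset.prod_const]
      exact Finset.prod_le_prod (fun _ _ => abs_nonneg _) hb'
    have hax : |a x| ≤ C := ha x (Finset.mem_insert_self x s)
    calc |a x * ∏ i ∈ s, a i - b x * ∏ i ∈ s, b i|
        ≤ |a x| * |(∏ i ∈ s, a i) - ∏ i ∈ s, b i| + |a x - b x| * |∏ i ∈ s, b i| := by
          rw [hsplit]
          refine (abs_add_le _ _).trans ?_
          rw [abs_mul, abs_mul]
      _ ≤ C * (C ^ s.card * ∑ i ∈ s, |a i - b i|) + |a x - b x| * C ^ s.card := by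
          refine add_le_add ?_ ?_
          · exact mul_le_mul hax ihs (abs_nonneg _) hC0
          · exact mul_le_mul_of_nonneg_left hprodb (abs_nonneg _)
      _ ≤ C ^ (s.card + 1) * (|a x - b x| + ∑ i ∈ s, |a i - b i|) := by
          rw [pow_succ]
          have h1 : C * (C ^ s.card * ∑ i ∈ s, |a i - b i|)
              = C ^ s.card * C * ∑ i ∈ s, |a i - b i| := by ring
          have h2 : C ^ s.card ≤ C ^ s.card * C := by
            nlinarith [pow_nonneg hC0 s.card]
          nlinarith [abs_nonneg (a x - b x), Finset.sum_nonneg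
            (fun i (_ : i ∈ s) => abs_nonneg (a i - b i)), pow_nonneg hC0 s.card]

end Approx

section Diff
variable {n : ℕ} (G : SimpleGraph (Fin n)) [DecidableRel G.Adj]

lemma edgePairs_ne {p : Fin n × Fin n} (hp : p ∈ edgePairs G) : p.1 ≠ p.2 := by
  simp only [edgePairs, Finset.mem_filter] at hp
  exact ne_of_lt hp.2.2

lemma tAbs_diff {f₁ f₂ : ℝ → ℝ → ℝ} (h₁ : Measurable (Function.uncurry f₁))
    (h₂ : Measurable (Function.uncurry f₂)) {C : ℝ} (hC : 1 ≤ C)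
    (hb₁ : ∀ x y, |f₁ x y| ≤ C) (hb₂ : ∀ x y, |f₂ x y| ≤ C) :
    |tAbs G f₁ - tAbs G f₂| ≤ (edgePairs G).card * C ^ (edgePairs G).card *
      ∫ z, |f₁ z.1 z.2 - f₂ z.1 z.2| ∂(mu0.prod mu0) := by
  classical
  set κ := (edgePairs G).card with hκ
  have hC0 : 0 ≤ C := le_trans zero_le_one hC
  set P₁ : (Fin n → ℝ) → ℝ := fun x => ∏ p ∈ edgePairs G, |f₁ (x p.1) (x p.2)| with hP₁
  set P₂ : (Fin n → ℝ) → ℝ := fun x => ∏ p ∈ edgePairs G, |f₂ (x p.1) (x p.2)| with hP₂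
  have hPb : ∀ (f : ℝ → ℝ → ℝ), (∀ x y, |f x y| ≤ C) →
      ∀ x : Fin n → ℝ, |(∏ p ∈ edgePairs G, |f (x p.1) (x p.2)|)| ≤ C ^ κ := by
    intro f hbf x
    rw [abs_of_nonneg (Finset.prod_nonneg fun _ _ => abs_nonneg _), ← Finset.prod_const]
    exact Finset.prod_le_prod (fun _ _ => abs_nonneg _) fun p _ => hbf _ _
  have int₁ : Integrable P₁ (volume.restrict (unitBox n)) :=
    integrable_of_bdd (measurable_prodFactor G h₁) (hPb f₁ hb₁)
  have int₂ : Integrable P₂ (volume.restrict (unitBox n)) :=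
    integrable_of_bdd (measurable_prodFactor G h₂) (hPb f₂ hb₂)
  have hmeas_term : ∀ p : Fin n × Fin n,
      Measurable fun x : Fin n → ℝ => |f₁ (x p.1) (x p.2) - f₂ (x p.1) (x p.2)| := by
    intro p
    have hpair : Measurable fun x : Fin n → ℝ => (x p.1, x p.2) :=
      (measurable_pi_apply p.1).prodMk (measurable_pi_apply p.2)
    exact ((h₁.comp hpair).sub (h₂.comp hpair)).abs
  have int_term : ∀ p : Fin n × Fin n, Integrable
      (fun x : Fin n → ℝ => |f₁ (x p.1) (x p.2) - f₂ (x p.1) (x p.2)|)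
      (volume.restrict (unitBox n)) := by
    intro p
    refine integrable_of_bdd (hmeas_term p) (C := 2 * C) fun x => ?_
    rw [abs_abs]
    calc |f₁ (x p.1) (x p.2) - f₂ (x p.1) (x p.2)|
        ≤ |f₁ (x p.1) (x p.2)| + |f₂ (x p.1) (x p.2)| := abs_sub _ _
      _ ≤ 2 * C := by have := hb₁ (x p.1) (x p.2); have := hb₂ (x p.1) (x p.2); linarith
  have step1 : |tAbs G f₁ - tAbs G f₂|
      ≤ ∫ x in unitBox n, |P₁ x - P₂ x| := by
    have : tAbs G f₁ - tAbs G f₂ = ∫ x in unitBox n, (P₁ x - P₂ x) :=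
      (integral_sub int₁ int₂).symm
    rw [this]
    simpa [Real.norm_eq_abs] using
      norm_integral_le_integral_norm (μ := volume.restrict (unitBox n)) (f := fun x => P₁ x - P₂ x)
  have step2 : (∫ x in unitBox n, |P₁ x - P₂ x|)
      ≤ ∫ x in unitBox n, C ^ κ *
          ∑ p ∈ edgePairs G, |f₁ (x p.1) (x p.2) - f₂ (x p.1) (x p.2)| := by
    refine integral_mono (int₁.sub int₂).abs ?_ ?_
    · exact (integrable_finset_sum _ fun p _ => int_term p).const_mul _
    · intro x
      have := abs_prod_sub_prod_le (edgePairs G)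
        (fun p => |f₁ (x p.1) (x p.2)|) (fun p => |f₂ (x p.1) (x p.2)|) hC
        (fun p _ => by rw [abs_abs]; exact hb₁ _ _)
        (fun p _ => by rw [abs_abs]; exact hb₂ _ _)
      refine this.trans ?_
      refine mul_le_mul_of_nonneg_left ?_ (by positivity)
      refine Finset.sum_le_sum fun p _ => ?_
      exact abs_abs_sub_abs_le_abs_sub _ _
  have step3 : (∫ x in unitBox n, C ^ κ *
        ∑ p ∈ edgePairs G, |f₁ (x p.1) (x p.2) - f₂ (x p.1) (x p.2)|)
      = C ^ κ * ∑ p ∈ edgePairs G,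
          ∫ x in unitBox n, |f₁ (x p.1) (x p.2) - f₂ (x p.1) (x p.2)| := by
    rw [MeasureTheory.integral_const_mul]
    congr 1
    exact integral_finset_sum _ fun p _ => int_term p
  have step4 : ∀ p ∈ edgePairs G,
      (∫ x in unitBox n, |f₁ (x p.1) (x p.2) - f₂ (x p.1) (x p.2)|)
        = ∫ z, |f₁ z.1 z.2 - f₂ z.1 z.2| ∂(mu0.prod mu0) := by
    intro p hp
    exact integral_eval_pair (edgePairs_ne G hp)
      (h := fun z : ℝ × ℝ => |f₁ z.1 z.2 - f₂ z.1 z.2|) (h₁.sub h₂).abs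
  calc |tAbs G f₁ - tAbs G f₂|
      ≤ _ := step1
    _ ≤ _ := step2
    _ = C ^ κ * ∑ p ∈ edgePairs G,
          ∫ x in unitBox n, |f₁ (x p.1) (x p.2) - f₂ (x p.1) (x p.2)| := step3
    _ = C ^ κ * (κ * ∫ z, |f₁ z.1 z.2 - f₂ z.1 z.2| ∂(mu0.prod mu0)) := by
        rw [Finset.sum_congr rfl step4, Finset.sum_const, nsmul_eq_mul]
    _ = κ * C ^ κ * ∫ z, |f₁ z.1 z.2 - f₂ z.1 z.2| ∂(mu0.prod mu0) := by ring

end Diff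

section ApproxStep
open Filter Topology

lemma clamp_abs_le {C v : ℝ} (hC : 0 ≤ C) : |max (-C) (min C v)| ≤ C := by
  rw [abs_le]
  constructor
  · exact le_max_left _ _
  · exact max_le (by linarith) (min_le_left _ _)

lemma clamp_sub_le {C a v : ℝ} (ha : |a| ≤ C) : |a - max (-C) (min C v)| ≤ |a - v| := by
  obtain ⟨ha1, ha2⟩ := abs_le.mp ha
  rcases lt_or_ge v (-C) with h1 | h1
  · rw [min_eq_right (by linarith), max_eq_left h1.le]
    rw [abs_of_nonneg (by linarith), abs_of_nonneg (by linarith)]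
    linarith
  · rcases lt_or_ge C v with h2 | h2
    · rw [min_eq_left h2.le, max_eq_right (by linarith)]
      rw [abs_of_nonpos (by linarith), abs_of_nonpos (by linarith)]
      linarith
    · rw [min_eq_right h2, max_eq_right h1]

lemma dist_cell_le {N : ℕ} (hN : 0 < N) {x : ℝ} (hx : x ∈ Set.Icc (0:ℝ) 1) :
    |x - (dIdx N x : ℝ) / N| ≤ 1 / N := by
  have hmem : x ∈ cellSet N (dIdx N x) := ⟨hx, rfl⟩
  have := cellSet_subset hN (dIdx_lt hN x) hmem
  obtain ⟨hlo, hhi⟩ := this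
  have hN' : (0:ℝ) < N := by exact_mod_cast hN
  rw [abs_of_nonneg (by linarith)]
  have : ((dIdx N x : ℝ) + 1) / N = (dIdx N x : ℝ) / N + 1 / N := by ring
  linarith [this ▸ hhi]

lemma exists_step_approx {f : ℝ → ℝ → ℝ} (hf : Measurable (Function.uncurry f))
    {C : ℝ} (hC1 : 1 ≤ C) (hb : ∀ x y, |f x y| ≤ C) {ε : ℝ} (hε : 0 < ε) :
    ∃ N : ℕ, 0 < N ∧ ∃ g : ℕ → ℕ → ℝ, (∀ x y, |stepFn N g x y| ≤ C) ∧
      ∫ z, |f z.1 z.2 - stepFn N g z.1 z.2| ∂(mu0.prod mu0) ≤ ε := by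
  have hC0 : 0 ≤ C := le_trans zero_le_one hC1
  set sq : Set (ℝ × ℝ) := Set.Icc (0:ℝ) 1 ×ˢ Set.Icc (0:ℝ) 1 with hsqdef
  have hsq : MeasurableSet sq := measurableSet_Icc.prod measurableSet_Icc
  have hprod : mu0.prod mu0 = (volume : Measure (ℝ × ℝ)).restrict sq := by
    rw [Measure.prod_restrict, ← Measure.volume_eq_prod]
  have hfmeas : Measurable fun z : ℝ × ℝ => f z.1 z.2 := hf
  have intf : Integrable (fun z : ℝ × ℝ => f z.1 z.2) (mu0.prod mu0) :=
    integrable_of_bdd hfmeas fun z => hb z.1 z.2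
  set f' : ℝ × ℝ → ℝ := sq.indicator (fun z => f z.1 z.2) with hf'def
  have intf' : Integrable f' volume := by
    rw [hf'def, integrable_indicator_iff hsq]
    rw [IntegrableOn, ← hprod]
    exact intf
  obtain ⟨g, gsupp, hg, gcont, -⟩ :=
    intf'.exists_hasCompactSupport_integral_sub_le (half_pos hε)
  have gu : UniformContinuous g := gsupp.uniformContinuous_of_continuous gcont
  obtain ⟨δ, hδ, hgδ⟩ := Metric.uniformContinuous_iff.mp gu (ε/2) (half_pos hε)
  obtain ⟨N₀, hN₀⟩ := exists_nat_gt (1/δ)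
  set N := N₀ + 1 with hNdef
  have hN : 0 < N := Nat.succ_pos _
  have hN' : (0:ℝ) < N := by exact_mod_cast hN
  have hNδ : 1 / (N:ℝ) < δ := by
    have h1 : 1/δ < (N:ℝ) := by
      calc 1/δ < N₀ := hN₀
        _ ≤ (N:ℝ) := by exact_mod_cast Nat.le_succ N₀
    rw [div_lt_iff₀ hN']
    rw [div_lt_iff₀ hδ] at h1
    linarith
  set g0 : ℕ → ℕ → ℝ := fun i j => max (-C) (min C (g ((i:ℝ)/N, (j:ℝ)/N))) with hg0def
  refine ⟨N, hN, g0, fun x y => clamp_abs_le hC0, ?_⟩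
  -- pointwise estimate on the square
  have hpt : ∀ z ∈ sq, |f z.1 z.2 - stepFn N g0 z.1 z.2| ≤ |f' z - g z| + ε/2 := by
    rintro z hz
    have hz1 : z.1 ∈ Set.Icc (0:ℝ) 1 := hz.1
    have hz2 : z.2 ∈ Set.Icc (0:ℝ) 1 := hz.2
    set w : ℝ × ℝ := ((dIdx N z.1 : ℝ)/N, (dIdx N z.2 : ℝ)/N) with hwdef
    have hdist : dist z w < δ := by
      rw [Prod.dist_eq]
      have d1 : dist z.1 w.1 ≤ 1/N := by rw [Real.dist_eq]; exact dist_cell_le hN hz1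
      have d2 : dist z.2 w.2 ≤ 1/N := by rw [Real.dist_eq]; exact dist_cell_le hN hz2
      exact lt_of_le_of_lt (max_le d1 d2) hNδ
    have hgz : |g z - g w| < ε/2 := by
      have := hgδ hdist
      rwa [Real.dist_eq] at this
    have hstep : stepFn N g0 z.1 z.2 = max (-C) (min C (g w)) := rfl
    have hfz : f' z = f z.1 z.2 := Set.indicator_of_mem hz _
    calc |f z.1 z.2 - stepFn N g0 z.1 z.2| ≤ |f z.1 z.2 - g w| := by
          rw [hstep]; exact clamp_sub_le (hb _ _)
      _ ≤ |f z.1 z.2 - g z| + |g z - g w| := abs_sub_le _ _ _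
      _ ≤ |f' z - g z| + ε/2 := by rw [hfz]; linarith
  -- integrate
  have hmeas_step : Measurable fun z : ℝ × ℝ => |f z.1 z.2 - stepFn N g0 z.1 z.2| := by
    have h2 : Measurable (Function.uncurry (stepFn N g0)) := measurable_stepFn N g0
    exact (hfmeas.sub h2).abs
  have int_lhs : Integrable (fun z : ℝ × ℝ => |f z.1 z.2 - stepFn N g0 z.1 z.2|)
      (mu0.prod mu0) := by
    refine integrable_of_bdd hmeas_step (C := 2*C) fun z => ?_
    rw [abs_abs]
    calc |f z.1 z.2 - stepFn N g0 z.1 z.2| ≤ |f z.1 z.2| + |stepFn N g0 z.1 z.2| := abs_sub _ _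
      _ ≤ C + C := add_le_add (hb _ _) (clamp_abs_le hC0)
      _ = 2*C := by ring
  have int_rhs : Integrable (fun z : ℝ × ℝ => |f' z - g z| + ε/2) (mu0.prod mu0) := by
    have h1 : Integrable (fun z : ℝ × ℝ => |f' z - g z|) (mu0.prod mu0) := by
      rw [hprod]
      exact ((intf'.sub (gcont.integrable_of_hasCompactSupport gsupp)).abs).restrict
    exact h1.add (integrable_const _)
  have hhint : (∫ z, |f' z - g z| ∂(mu0.prod mu0)) ≤ ε/2 := by
    have h1 : (∫ z, |f' z - g z| ∂(mu0.prod mu0)) ≤ ∫ z, |f' z - g z| ∂(volume) := by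
      rw [hprod]
      refine integral_mono_measure Measure.restrict_le_self
        (ae_of_all _ fun z => abs_nonneg _) ?_
      exact (intf'.sub (gcont.integrable_of_hasCompactSupport gsupp)).abs
    refine h1.trans ?_
    simpa [Real.norm_eq_abs] using hg
  calc (∫ z, |f z.1 z.2 - stepFn N g0 z.1 z.2| ∂(mu0.prod mu0))
      ≤ ∫ z, (|f' z - g z| + ε/2) ∂(mu0.prod mu0) := by
        refine integral_mono_of_nonneg (ae_of_all _ fun z => abs_nonneg _) int_rhs ?_
        rw [hprod, Filter.EventuallyLE, ae_restrict_iff' hsq]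
        exact ae_of_all _ hpt
    _ = (∫ z, |f' z - g z| ∂(mu0.prod mu0)) + ε/2 := by
        rw [integral_add (by
          rw [hprod]
          exact ((intf'.sub (gcont.integrable_of_hasCompactSupport gsupp)).abs).restrict)
          (integrable_const _)]
        simp [measure_univ]
    _ ≤ ε/2 + ε/2 := by linarith
    _ = ε := by ring

end ApproxStep


open Filter Topology

/-- If `H` is weakly norming and `J` is a subgraph of `H` (with at least one edge), then
`‖f‖_{r(J)} ≤ ‖f‖_{r(H)}` for every bounded measurable `f : [0,1]² → ℝ`. -/
theorem rNorm_mono_of_weaklyNorming {n : ℕ}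
    (H J : SimpleGraph (Fin n)) [DecidableRel H.Adj] [DecidableRel J.Adj]
    (hWN : WeaklyNorming H) (hJH : J ≤ H) (hJE : (edgePairs J).Nonempty)
    (f : ℝ → ℝ → ℝ) (hf : Measurable (Function.uncurry f)) (hb : BddFun f) :
    rNorm J f ≤ rNorm H f := by
  classical
  obtain ⟨C₀, hC₀⟩ := hb
  set C := max C₀ 1 with hCdef
  have hC1 : 1 ≤ C := le_max_right _ _
  have hbC : ∀ x y, |f x y| ≤ C := fun x y => (hC₀ x y).trans (le_max_left _ _)
  have happrox : ∀ i : ℕ, ∃ N : ℕ, 0 < N ∧ ∃ g : ℕ → ℕ → ℝ,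
      (∀ x y, |stepFn N g x y| ≤ C) ∧
      ∫ z, |f z.1 z.2 - stepFn N g z.1 z.2| ∂(mu0.prod mu0) ≤ 1/((i:ℝ)+1) := by
    intro i
    exact exists_step_approx hf hC1 hbC (by positivity)
  choose N hN g hg hδ using happrox
  set q : ℕ → ℝ → ℝ → ℝ := fun i => stepFn (N i) (g i) with hqdef
  have hqm : ∀ i, Measurable (Function.uncurry (q i)) := fun i => measurable_stepFn _ _
  have hle : ∀ i, rNorm J (q i) ≤ rNorm H (q i) := fun i =>
    rNorm_step_le hWN hJH hJE (hN i) (g i)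
  have key : ∀ (G : SimpleGraph (Fin n)) (inst : DecidableRel G.Adj),
      Tendsto (fun i => @tAbs n G inst (q i)) atTop (𝓝 (@tAbs n G inst f)) := by
    intro G inst
    set κ := (@edgePairs n G inst).card with hκ
    set K := (κ : ℝ) * C ^ κ with hK
    have hK0 : 0 ≤ K := by positivity
    have hbound : ∀ i, |@tAbs n G inst f - @tAbs n G inst (q i)| ≤ K * (1/((i:ℝ)+1)) := by
      intro i
      have h1 := @tAbs_diff n G inst f (q i) hf (hqm i) C hC1 hbC (hg i)
      refine h1.trans ?_
      exact mul_le_mul_of_nonneg_left (hδ i) hK0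
    have h0 : Tendsto (fun i : ℕ => K * (1/((i:ℝ)+1))) atTop (𝓝 0) := by
      have := (tendsto_one_div_add_atTop_nhds_zero_nat).const_mul K
      simpa using this
    have hdist : Tendsto (fun i => |@tAbs n G inst f - @tAbs n G inst (q i)|) atTop (𝓝 0) :=
      squeeze_zero (fun i => abs_nonneg _) hbound h0
    rw [tendsto_iff_dist_tendsto_zero]
    refine hdist.congr fun i => ?_
    rw [Real.dist_eq, abs_sub_comm]
  have rtend : ∀ (G : SimpleGraph (Fin n)) (inst : DecidableRel G.Adj),
      Tendsto (fun i => @rNorm n G inst (q i)) atTop (𝓝 (@rNorm n G inst f)) := by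
    intro G inst
    have hcont : ContinuousAt (fun x : ℝ => x ^ (((@edgePairs n G inst).card : ℝ)⁻¹))
        (@tAbs n G inst f) :=
      Real.continuousAt_rpow_const _ _ (Or.inr (by positivity))
    exact hcont.tendsto.comp (key G inst)
  exact le_of_tendsto_of_tendsto' (rtend J _) (rtend H _) hle
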